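/- arXiv:2105.00880 — 3 statements merged into one kernel-verified Lean document; each statement's English description precedes it below -/
import Mathlib

section
/- Let p, q be real numbers with p - q > 1 and p, q ≥ 0, let N, d ∈ ℕ with d ≥ 1, and let W_1(k) = k^p + 1, W_2(k) = k^q + 1. Let (φ_n)_{n≥0} be any sequence in ℤ^d with the flow property: |Σ_j φ_n(j)| ≤ N for all n, and at each step exactly one positive coordinate increments by 1, one nonpositive coordinate decrements by 1, and all others stay fixed. Define Υ^+(φ_n) = Σ_{j: φ_n(j)>0} W_1(φ_n(j)) and Υ^-(φ_n) = Σ_{j: φ_n(j)≤0} W_2(-φ_n(j)). Then Σ_{n=0}^∞ Υ^-(φ_n)/Υ^+(φ_n) < ∞, with a bound depending only on p, q, N, d. -/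
/-- The flow property of admissible crossing-number evolutions. -/
def IsFlowSeq (N d : ℕ) (φ : ℕ → Fin d → ℤ) : Prop :=
  (∀ n, |∑ j, φ n j| ≤ (N : ℤ)) ∧
  ∀ n, ∃ j₁ j₂ : Fin d, j₁ ≠ j₂ ∧
    0 < φ n j₁ ∧ φ (n + 1) j₁ = φ n j₁ + 1 ∧
    φ n j₂ ≤ 0 ∧ φ (n + 1) j₂ = φ n j₂ - 1 ∧
    ∀ j, j ≠ j₁ → j ≠ j₂ → φ (n + 1) j = φ n j

/-!
The positive coordinates of a flow sequence never change sign, so `F₊(φₙ)`, the total positive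
mass, grows by exactly one per step and is at least `n + 1`; the bound `|∑ φₙ| ≤ N` then gives
`-F₋(φₙ) ≤ F₊(φₙ) + N`. Hence `Υ⁻(φₙ) ≲ F₊(φₙ) ^ q`, while power-sum comparability for `p ≥ 1`
gives `Υ⁺(φₙ) ≳ F₊(φₙ) ^ p`, so the `n`-th term is `O((n + 1) ^ (q - p))`, which is summable as
`p - q > 1`.
-/

open Finset

section Masses

variable {ι : Type*} [Fintype ι]

/-- `posMass v` and `negMass v` are `F₊(v)` and `-F₋(v)` of the paper. -/
def posMass (v : ι → ℤ) : ℤ :=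
  ∑ j ∈ univ.filter (fun j => 0 < v j), v j

def negMass (v : ι → ℤ) : ℤ :=
  ∑ j ∈ univ.filter (fun j => v j ≤ 0), -v j

/-- `Υ⁺` of the paper, for the weight `W₁(k) = k ^ p + 1`. -/
noncomputable def upsilonPlus (p : ℝ) (v : ι → ℤ) : ℝ :=
  ∑ j ∈ univ.filter (fun j => 0 < v j), (((v j : ℤ) : ℝ) ^ p + 1)

/-- `Υ⁻` of the paper, for the weight `W₂(k) = k ^ q + 1`. -/
noncomputable def upsilonMinus (q : ℝ) (v : ι → ℤ) : ℝ :=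
  ∑ j ∈ univ.filter (fun j => v j ≤ 0), (((-v j : ℤ) : ℝ) ^ q + 1)

lemma le_posMass {v : ι → ℤ} {j : ι} (hj : 0 < v j) : v j ≤ posMass v :=
  single_le_sum (f := v) (fun k hk => (mem_filter.1 hk).2.le) (by simpa using hj)

lemma negMass_nonneg (v : ι → ℤ) : 0 ≤ negMass v :=
  sum_nonneg fun _ hk => neg_nonneg.2 (mem_filter.1 hk).2

lemma le_negMass {v : ι → ℤ} {j : ι} (hj : v j ≤ 0) : -v j ≤ negMass v :=
  single_le_sum (f := fun k => -v k) (fun _ hk => neg_nonneg.2 (mem_filter.1 hk).2)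
    (by simpa using hj)

lemma upsilonPlus_nonneg (p : ℝ) (v : ι → ℤ) : 0 ≤ upsilonPlus p v :=
  sum_nonneg fun j hj => by
    have : (0 : ℝ) ≤ v j := by exact_mod_cast (mem_filter.1 hj).2.le
    positivity

lemma upsilonMinus_nonneg (q : ℝ) (v : ι → ℤ) : 0 ≤ upsilonMinus q v :=
  sum_nonneg fun j hj => by
    have : (0 : ℝ) ≤ ((-v j : ℤ) : ℝ) := by exact_mod_cast neg_nonneg.2 (mem_filter.1 hj).2
    positivity

lemma posMass_sub_negMass (v : ι → ℤ) : posMass v - negMass v = ∑ j, v j := by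
  rw [posMass, negMass, sum_neg_distrib, sub_neg_eq_add,
    ← sum_filter_add_sum_filter_not univ (fun j => 0 < v j)]
  simp only [not_lt]

lemma negMass_le_posMass_add {N : ℕ} {v : ι → ℤ} (hv : |∑ j, v j| ≤ N) :
    negMass v ≤ posMass v + N := by
  linarith [posMass_sub_negMass v, (abs_le.1 hv).1]

lemma upsilonMinus_le {q : ℝ} (hq : 0 ≤ q) (v : ι → ℤ) :
    upsilonMinus q v ≤ Fintype.card ι * ((negMass v : ℝ) ^ q + 1) := by
  have hT : (0 : ℝ) ≤ negMass v := by exact_mod_cast negMass_nonneg v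
  calc upsilonMinus q v ≤ #(univ.filter (fun j => v j ≤ 0)) • ((negMass v : ℝ) ^ q + 1) := by
        refine sum_le_card_nsmul _ _ _ fun j hj => ?_
        have hj : v j ≤ 0 := (mem_filter.1 hj).2
        gcongr
        · exact_mod_cast neg_nonneg.2 hj
        · exact_mod_cast le_negMass hj
    _ ≤ Fintype.card ι * ((negMass v : ℝ) ^ q + 1) := by
        rw [nsmul_eq_mul]
        gcongr
        exact_mod_cast card_le_univ _

lemma rpow_posMass_le {p : ℝ} (hp : 1 ≤ p) (v : ι → ℤ) :
    (posMass v : ℝ) ^ p ≤ (Fintype.card ι : ℝ) ^ (p - 1) * upsilonPlus p v := by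
  have hnonneg : ∀ j ∈ univ.filter (fun j => 0 < v j), (0 : ℝ) ≤ v j := fun j hj => by
    exact_mod_cast (mem_filter.1 hj).2.le
  rw [posMass, Int.cast_sum, upsilonPlus]
  refine (Real.rpow_sum_le_const_mul_sum_rpow_of_nonneg _ hp hnonneg).trans ?_
  gcongr ?_ * ?_
  · exact sum_nonneg fun j hj => Real.rpow_nonneg (hnonneg j hj) p
  · exact Real.rpow_le_rpow (by positivity) (by exact_mod_cast card_le_univ _) (sub_nonneg.2 hp)
  · exact sum_le_sum fun j _ => le_add_of_nonneg_right zero_le_one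

lemma upsilonMinus_div_upsilonPlus_le {p q : ℝ} (hq : 0 ≤ q) (hp : 1 ≤ p) {N : ℕ} {v : ι → ℤ}
    (hv : |∑ j, v j| ≤ N) (hS : 1 ≤ posMass v) :
    upsilonMinus q v / upsilonPlus p v ≤
      Fintype.card ι * (Fintype.card ι : ℝ) ^ (p - 1) * (((N : ℝ) + 1) ^ q + 1) *
        (posMass v : ℝ) ^ (q - p) := by
  have hS1 : (1 : ℝ) ≤ posMass v := by exact_mod_cast hS
  have hTS : (negMass v : ℝ) ≤ posMass v + N := by exact_mod_cast negMass_le_posMass_add hv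
  set S : ℝ := ((posMass v : ℤ) : ℝ)
  set K : ℝ := ((N : ℝ) + 1) ^ q + 1
  have hS0 : 0 < S := one_pos.trans_le hS1
  have hT : (negMass v : ℝ) ≤ (N + 1) * S := by nlinarith [(N.cast_nonneg : (0 : ℝ) ≤ N)]
  have hnum : upsilonMinus q v ≤ Fintype.card ι * K * S ^ q := by
    refine (upsilonMinus_le hq v).trans ?_
    rw [mul_assoc]
    gcongr
    calc (negMass v : ℝ) ^ q + 1 ≤ ((N + 1) * S) ^ q + S ^ q := by
          gcongr
          · exact_mod_cast negMass_nonneg v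
          · exact Real.one_le_rpow hS1 hq
      _ = K * S ^ q := by rw [Real.mul_rpow (by positivity) hS0.le]; ring
  have hden := rpow_posMass_le hp v
  have hplus : 0 < upsilonPlus p v :=
    pos_of_mul_pos_right ((Real.rpow_pos_of_pos hS0 p).trans_le hden) (by positivity)
  rw [div_le_iff₀ hplus]
  calc upsilonMinus q v ≤ Fintype.card ι * K * (S ^ (q - p) * S ^ p) := by
        rwa [← Real.rpow_add hS0, sub_add_cancel]
    _ ≤ Fintype.card ι * K * (S ^ (q - p) *
          ((Fintype.card ι : ℝ) ^ (p - 1) * upsilonPlus p v)) := by gcongr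
    _ = _ := by ring

end Masses

namespace IsFlowSeq

variable {N d : ℕ} {φ : ℕ → Fin d → ℤ}

lemma filter_pos_succ (h : IsFlowSeq N d φ) (n : ℕ) :
    univ.filter (fun j => 0 < φ (n + 1) j) = univ.filter (fun j => 0 < φ n j) := by
  obtain ⟨j₁, j₂, -, h₁, e₁, h₂, e₂, hrest⟩ := h.2 n
  ext j
  simp only [mem_filter, mem_univ, true_and]
  by_cases hj₁ : j = j₁
  · subst hj₁; omega
  by_cases hj₂ : j = j₂
  · subst hj₂; omega
  · rw [hrest j hj₁ hj₂]

lemma posMass_succ (h : IsFlowSeq N d φ) (n : ℕ) :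
    posMass (φ (n + 1)) = posMass (φ n) + 1 := by
  obtain ⟨j₁, j₂, -, h₁, e₁, h₂, -, hrest⟩ := h.2 n
  have hstep : ∀ j ∈ univ.filter (fun j => 0 < φ n j),
      φ (n + 1) j = φ n j + if j = j₁ then 1 else 0 := by
    intro j hj
    have hj : 0 < φ n j := (mem_filter.1 hj).2
    split_ifs with hj₁
    · rw [hj₁, e₁]
    · rw [hrest j hj₁ (by rintro rfl; omega), add_zero]
  rw [posMass, filter_pos_succ h, sum_congr rfl hstep, sum_add_distrib, sum_ite_eq',
    if_pos (by simpa using h₁), posMass]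

lemma add_one_le_posMass (h : IsFlowSeq N d φ) (n : ℕ) : (n : ℤ) + 1 ≤ posMass (φ n) := by
  induction n with
  | zero =>
    obtain ⟨j₁, -, -, h₁, -⟩ := h.2 0
    have := le_posMass h₁
    push_cast
    omega
  | succ n ih => rw [posMass_succ h]; push_cast; omega

end IsFlowSeq

theorem stmt_14_general (p q : ℝ) (hq : 0 ≤ q) (hpq : 1 < p - q)
    (N d : ℕ) :
    ∃ B : ℝ, ∀ φ : ℕ → Fin d → ℤ, IsFlowSeq N d φ →
      Summable (fun n : ℕ =>
        (∑ j ∈ Finset.univ.filter (fun j => φ n j ≤ 0), (((-φ n j : ℤ) : ℝ) ^ q + 1)) /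
        (∑ j ∈ Finset.univ.filter (fun j => 0 < φ n j), (((φ n j : ℤ) : ℝ) ^ p + 1))) ∧
      (∑' n : ℕ,
        (∑ j ∈ Finset.univ.filter (fun j => φ n j ≤ 0), (((-φ n j : ℤ) : ℝ) ^ q + 1)) /
        (∑ j ∈ Finset.univ.filter (fun j => 0 < φ n j), (((φ n j : ℤ) : ℝ) ^ p + 1))) ≤ B := by
  set C : ℝ := d * (d : ℝ) ^ (p - 1) * (((N : ℝ) + 1) ^ q + 1)
  have hC : 0 ≤ C := by positivity
  have hseries : Summable (fun n : ℕ => C * ((n : ℝ) + 1) ^ (q - p)) := by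
    have := (summable_nat_add_iff 1).2 ((Real.summable_nat_rpow (p := q - p)).2 (by linarith))
    refine (this.mul_left C).congr fun n => ?_
    push_cast; rfl
  refine ⟨∑' n : ℕ, C * ((n : ℝ) + 1) ^ (q - p), fun φ hφ => ?_⟩
  have hbound : ∀ n,
      upsilonMinus q (φ n) / upsilonPlus p (φ n) ≤ C * ((n : ℝ) + 1) ^ (q - p) := by
    intro n
    have hS : (n : ℤ) + 1 ≤ posMass (φ n) := hφ.add_one_le_posMass n
    refine (upsilonMinus_div_upsilonPlus_le hq (show 1 ≤ p by linarith) (hφ.1 n)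
      (by omega)).trans ?_
    rw [Fintype.card_fin]
    exact mul_le_mul_of_nonneg_left
      (Real.rpow_le_rpow_of_nonpos (by positivity) (by exact_mod_cast hS) (by linarith)) hC
  have hnonneg : ∀ n, 0 ≤ upsilonMinus q (φ n) / upsilonPlus p (φ n) := fun n =>
    div_nonneg (upsilonMinus_nonneg q (φ n)) (upsilonPlus_nonneg p (φ n))
  have hsum := hseries.of_nonneg_of_le hnonneg hbound
  exact ⟨hsum, hsum.tsum_le_tsum hbound hseries⟩

theorem stmt_14 (p q : ℝ) (hp : 0 ≤ p) (hq : 0 ≤ q) (hpq : 1 < p - q)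
    (N d : ℕ) (hd : 1 ≤ d) :
    ∃ B : ℝ, ∀ φ : ℕ → Fin d → ℤ, IsFlowSeq N d φ →
      Summable (fun n : ℕ =>
        (∑ j ∈ Finset.univ.filter (fun j => φ n j ≤ 0), (((-φ n j : ℤ) : ℝ) ^ q + 1)) /
        (∑ j ∈ Finset.univ.filter (fun j => 0 < φ n j), (((φ n j : ℤ) : ℝ) ^ p + 1))) ∧
      (∑' n : ℕ,
        (∑ j ∈ Finset.univ.filter (fun j => φ n j ≤ 0), (((-φ n j : ℤ) : ℝ) ^ q + 1)) /
        (∑ j ∈ Finset.univ.filter (fun j => 0 < φ n j), (((φ n j : ℤ) : ℝ) ^ p + 1))) ≤ B :=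
  stmt_14_general p q hq hpq N d
end

section
/- Let W_1 : ℕ → (0,∞) satisfy Σ_{k=1}^∞ 1/W_1(k) < ∞ and let W_2 : ℕ → (0,∞) be non-increasing. Let N, d ∈ ℕ with d ≥ 1, and let (φ_n)_{n≥0} be any sequence in ℤ^d with the flow property (|Σ_j φ_n(j)| ≤ N; at each step exactly one positive coordinate increments by 1, one nonpositive coordinate decrements by 1, all others fixed). With Υ^+(φ_n) = Σ_{j: φ_n(j)>0} W_1(φ_n(j)) and Υ^-(φ_n) = Σ_{j: φ_n(j)≤0} W_2(-φ_n(j)), one has Σ_{n=0}^∞ Υ^-(φ_n)/Υ^+(φ_n) ≤ d·W_2(0)·d·Σ_{k=1}^∞ 1/W_1(k) < ∞. -/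
/-!
At every step some positive coordinate `i n` is raised from a level `k + 1` to `k + 2`, and positive
coordinates never decrease, so the pair `(i n, k)` never repeats. The numerator `Υ⁻(φ n)` is at
most `d · W₂ 0` because `W₂` is non-increasing, and the denominator `Υ⁺(φ n)` is at least
`W₁ (k + 1)`. Hence the `n`-th term is at most `d · W₂ 0 / W₁ (k + 1)`, and since each level `k`
occurs for at most `d` values of `n`, the series is dominated by `d · W₂ 0 · d · ∑ 1 / W₁ (k + 1)`.
-/

open Finset Function

/-- Injectivity of the labels means that each level `k` bounds at most `card ι` terms `T n`. -/
theorem summable_and_tsum_le_card_mul_of_injective {ι : Type*} [Fintype ι] {T a : ℕ → ℝ}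
    (i : ℕ → ι) (k : ℕ → ℕ) (hinj : Injective fun n => (i n, k n))
    (hT₀ : ∀ n, 0 ≤ T n) (ha : Summable a) (ha₀ : ∀ k, 0 ≤ a k) (hTa : ∀ n, T n ≤ a (k n)) :
    Summable T ∧ ∑' n, T n ≤ Fintype.card ι * ∑' k, a k := by
  have hF : Summable fun p : ι × ℕ => a p.2 :=
    (summable_prod_of_nonneg fun p => ha₀ p.2).2 ⟨fun _ => ha, .of_finite⟩
  have hT : Summable T := .of_nonneg_of_le hT₀ hTa (hF.comp_injective hinj)
  refine ⟨hT, ?_⟩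
  calc ∑' n, T n ≤ ∑' p : ι × ℕ, a p.2 :=
        hT.tsum_le_tsum_of_inj _ hinj (fun p _ => ha₀ p.2) hTa hF
    _ = Fintype.card ι * ∑' k, a k := by
        simp only [hF.tsum_prod, tsum_fintype, sum_const, card_univ, nsmul_eq_mul]

section Upsilon

variable {ι : Type*} [Fintype ι] (x : ι → ℤ)

theorem sum_filter_nonpos_le_card_mul {W : ℕ → ℝ} (hW : Antitone W) (hW₀ : 0 ≤ W 0) :
    ∑ j ∈ univ.filter (fun j => x j ≤ 0), W (-x j).toNat ≤ Fintype.card ι * W 0 :=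
  calc ∑ j ∈ univ.filter (fun j => x j ≤ 0), W (-x j).toNat
      ≤ ∑ _j ∈ univ.filter (fun j => x j ≤ 0), W 0 := sum_le_sum fun _ _ => hW (Nat.zero_le _)
    _ = #(univ.filter fun j => x j ≤ 0) * W 0 := by rw [sum_const, nsmul_eq_mul]
    _ ≤ Fintype.card ι * W 0 := by gcongr; exact card_le_univ _

theorem le_sum_filter_pos {W : ℕ → ℝ} (hW : ∀ k, 0 ≤ W k) {i : ι} (hi : 0 < x i) :
    W (x i).toNat ≤ ∑ j ∈ univ.filter (fun j => 0 < x j), W (x j).toNat :=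
  single_le_sum (f := fun j => W (x j).toNat) (fun _ _ => hW _) (by simpa using hi)

theorem sum_filter_nonpos_div_sum_filter_pos_le {W₁ W₂ : ℕ → ℝ} (hW₁ : ∀ k, 0 < W₁ k)
    (hW₂ : Antitone W₂) (hW₂₀ : 0 ≤ W₂ 0) {i : ι} {k : ℕ} (hi : x i = k + 1) :
    (∑ j ∈ univ.filter (fun j => x j ≤ 0), W₂ (-x j).toNat) /
        (∑ j ∈ univ.filter (fun j => 0 < x j), W₁ (x j).toNat)
      ≤ Fintype.card ι * W₂ 0 * (1 / W₁ (k + 1)) := by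
  have hden := le_sum_filter_pos x (fun k => (hW₁ k).le) (i := i) (by omega)
  rw [show (x i).toNat = k + 1 by omega] at hden
  rw [mul_one_div]
  exact div_le_div₀ (by positivity) (sum_filter_nonpos_le_card_mul x hW₂ hW₂₀) (hW₁ _) hden

end Upsilon

namespace IsFlowSeq

variable {N d : ℕ} {φ : ℕ → Fin d → ℤ}

theorem le_succ_of_pos (hφ : IsFlowSeq N d φ) {n : ℕ} {j : Fin d} (hj : 0 < φ n j) :
    φ n j ≤ φ (n + 1) j := by
  obtain ⟨j₁, j₂, -, -, h₁, h₂, -, hother⟩ := hφ.2 n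
  by_cases hj₁ : j = j₁
  · subst hj₁; omega
  by_cases hj₂ : j = j₂
  · subst hj₂; omega
  · exact (hother j hj₁ hj₂).ge

theorem le_of_le_of_pos (hφ : IsFlowSeq N d φ) {n m : ℕ} (hnm : n ≤ m) {j : Fin d}
    (hj : 0 < φ n j) : φ n j ≤ φ m j := by
  induction m, hnm using Nat.le_induction with
  | base => exact le_rfl
  | succ m _ ih => exact ih.trans (hφ.le_succ_of_pos (hj.trans_le ih))

theorem exists_injective_level (hφ : IsFlowSeq N d φ) :
    ∃ (i : ℕ → Fin d) (k : ℕ → ℕ),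
      Injective (fun n => (i n, k n)) ∧ ∀ n, φ n (i n) = k n + 1 := by
  choose i _ _ hpos hinc _ using hφ.2
  have hlevel : ∀ n, φ n (i n) = ((φ n (i n)).toNat - 1 : ℕ) + 1 := fun n => by
    have := hpos n; omega
  refine ⟨i, fun n => (φ n (i n)).toNat - 1, ?_, hlevel⟩
  have hlt : ∀ n m, n < m → i n = i m → φ n (i n) < φ m (i m) := fun n m hnm hi => by
    have := hφ.le_of_le_of_pos hnm (j := i n) (by rw [hinc]; linarith [hpos n])
    rw [← hi]; linarith [hinc n]
  intro n m hnm
  simp only [Prod.mk.injEq] at hnm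
  obtain ⟨hi, hk⟩ := hnm
  have hφnm : φ n (i n) = φ m (i m) := by rw [hlevel n, hlevel m, hk]
  rcases lt_trichotomy n m with h | h | h
  · exact absurd hφnm (hlt n m h hi).ne
  · exact h
  · exact absurd hφnm (hlt m n h hi.symm).ne'

end IsFlowSeq

theorem stmt_15_general (W₁ W₂ : ℕ → ℝ) (hW₁pos : ∀ k, 0 < W₁ k) (hW₂pos : ∀ k, 0 < W₂ k)
    (hW₁sum : Summable (fun k : ℕ => 1 / W₁ (k + 1))) (hW₂mono : Antitone W₂)
    (N d : ℕ) (φ : ℕ → Fin d → ℤ) (hφ : IsFlowSeq N d φ) :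
    Summable (fun n : ℕ =>
      (∑ j ∈ Finset.univ.filter (fun j => φ n j ≤ 0), W₂ (-φ n j).toNat) /
      (∑ j ∈ Finset.univ.filter (fun j => 0 < φ n j), W₁ (φ n j).toNat)) ∧
    (∑' n : ℕ,
      (∑ j ∈ Finset.univ.filter (fun j => φ n j ≤ 0), W₂ (-φ n j).toNat) /
      (∑ j ∈ Finset.univ.filter (fun j => 0 < φ n j), W₁ (φ n j).toNat))
      ≤ (d : ℝ) * W₂ 0 * ((d : ℝ) * ∑' k : ℕ, 1 / W₁ (k + 1)) := by
  obtain ⟨i, k, hinj, hlevel⟩ := hφ.exists_injective_level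
  have hW₂₀ := (hW₂pos 0).le
  obtain ⟨hsum, hle⟩ := summable_and_tsum_le_card_mul_of_injective i k hinj
    (fun n => div_nonneg (sum_nonneg fun _ _ => (hW₂pos _).le)
      (sum_nonneg fun _ _ => (hW₁pos _).le))
    (hW₁sum.mul_left (d * W₂ 0))
    (fun k => mul_nonneg (by positivity) (one_div_nonneg.2 (hW₁pos _).le))
    (fun n => by
      simpa only [Fintype.card_fin] using
        sum_filter_nonpos_div_sum_filter_pos_le (φ n) hW₁pos hW₂mono hW₂₀ (hlevel n))
  refine ⟨hsum, hle.trans_eq ?_⟩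
  rw [Fintype.card_fin, tsum_mul_left]
  ring

theorem stmt_15 (W₁ W₂ : ℕ → ℝ) (hW₁pos : ∀ k, 0 < W₁ k) (hW₂pos : ∀ k, 0 < W₂ k)
    (hW₁sum : Summable (fun k : ℕ => 1 / W₁ (k + 1))) (hW₂mono : Antitone W₂)
    (N d : ℕ) (hd : 1 ≤ d) (φ : ℕ → Fin d → ℤ) (hφ : IsFlowSeq N d φ) :
    Summable (fun n : ℕ =>
      (∑ j ∈ Finset.univ.filter (fun j => φ n j ≤ 0), W₂ (-φ n j).toNat) /
      (∑ j ∈ Finset.univ.filter (fun j => 0 < φ n j), W₁ (φ n j).toNat)) ∧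
    (∑' n : ℕ,
      (∑ j ∈ Finset.univ.filter (fun j => φ n j ≤ 0), W₂ (-φ n j).toNat) /
      (∑ j ∈ Finset.univ.filter (fun j => 0 < φ n j), W₁ (φ n j).toNat))
      ≤ (d : ℝ) * W₂ 0 * ((d : ℝ) * ∑' k : ℕ, 1 / W₁ (k + 1)) :=
  stmt_15_general W₁ W₂ hW₁pos hW₂pos hW₁sum hW₂mono N d φ hφ
end

section
/- Let f : ℕ → (0,∞) and suppose W(k) = Σ_{i=1}^j f(a_i) ≤ C_j·f(Σ_{i=1}^j a_i) holds for some constants C_j (i.e., f ∈ P_≤). If g : ℕ → (0,∞) satisfies the reversed inequality with constants C_j' (i.e., g ∈ P_≥), g satisfies g(n+M) ≤ C·g(n) for all |M| ≤ N with n+M ≥ 0, and Σ_{n=1}^∞ g(n)/f(n) < ∞, then for any d ≥ 1 and any flow sequence (φ_n) ∈ ℤ^d (with |Σ_j φ_n(j)| ≤ N and the one-increment/one-decrement step rule), one has Σ_{n=0}^∞ (Σ_{j: φ_n(j)≤0} g(-φ_n(j)))/(Σ_{j: φ_n(j)>0} f(φ_n(j))) < ∞. -/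
/-- Proposition 4.6(d): if `f ∈ P_≥`, `g ∈ P_≤`, `g` is `N`-shift comparable and
`Σ g/f < ∞`, then the ratio `Υ⁻/Υ⁺` is summable along any flow sequence. -/
theorem stmt_19 (f g : ℕ → ℝ) (hfpos : ∀ k, 0 < f k) (hgpos : ∀ k, 0 < g k)
    (hfP : ∀ j : ℕ, 1 ≤ j → ∃ c > (0 : ℝ), ∀ a : Fin j → ℕ,
      c * f (∑ i, a i) ≤ ∑ i, f (a i))
    (hgP : ∀ j : ℕ, 1 ≤ j → ∃ C > (0 : ℝ), ∀ a : Fin j → ℕ,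
      ∑ i, g (a i) ≤ C * g (∑ i, a i))
    (N : ℕ)
    (hgshift : ∃ C > (0 : ℝ), ∀ M : ℤ, |M| ≤ (N : ℤ) → ∀ n : ℕ,
      0 ≤ (n : ℤ) + M → g ((n : ℤ) + M).toNat ≤ C * g n)
    (hsum : Summable (fun n : ℕ => g (n + 1) / f (n + 1)))
    (d : ℕ) (hd : 1 ≤ d) (φ : ℕ → Fin d → ℤ) (hφ : IsFlowSeq N d φ) :
    Summable (fun n : ℕ =>
      (∑ j ∈ Finset.univ.filter (fun j => φ n j ≤ 0), g (-φ n j).toNat) /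
      (∑ j ∈ Finset.univ.filter (fun j => 0 < φ n j), f (φ n j).toNat)) := by
  classical
  obtain ⟨habs, hstep⟩ := hφ
  obtain ⟨Cs, hCspos, hCshift⟩ := hgshift
  choose cc hccpos hcc using hfP
  choose CC hCCpos hCC using hgP
  set c' : ℕ → ℝ := fun j => if h : 1 ≤ j then cc j h else 1 with hc'def
  set C' : ℕ → ℝ := fun j => if h : 1 ≤ j then CC j h else 1 with hC'def
  have hc'pos : ∀ j, 0 < c' j := by
    intro j
    by_cases h : 1 ≤ j
    · simp only [hc'def, dif_pos h]; exact hccpos j h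
    · simp only [hc'def, dif_neg h]; norm_num
  have hC'pos : ∀ j, 0 < C' j := by
    intro j
    by_cases h : 1 ≤ j
    · simp only [hC'def, dif_pos h]; exact hCCpos j h
    · simp only [hC'def, dif_neg h]; norm_num
  have hIne : (Finset.Icc 1 d).Nonempty := ⟨1, by simp [hd]⟩
  set cmin := (Finset.Icc 1 d).inf' hIne c' with hcmindef
  set Cmax := (Finset.Icc 1 d).sup' hIne C' with hCmaxdef
  have hcminpos : 0 < cmin := (Finset.lt_inf'_iff hIne).mpr fun i _ => hc'pos i
  have hcminle : ∀ k, 1 ≤ k → k ≤ d → cmin ≤ c' k := fun k h1 h2 =>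
    Finset.inf'_le c' (Finset.mem_Icc.mpr ⟨h1, h2⟩)
  have hCmaxge : ∀ k, 1 ≤ k → k ≤ d → C' k ≤ Cmax := fun k h1 h2 =>
    Finset.le_sup' C' (Finset.mem_Icc.mpr ⟨h1, h2⟩)
  have hCmaxpos : 0 < Cmax := lt_of_lt_of_le (hC'pos 1) (hCmaxge 1 le_rfl hd)
  set S : ℕ → ℕ := fun n => ∑ j, (φ n j).toNat with hSdef
  set T : ℕ → ℕ := fun n => ∑ j, (-φ n j).toNat with hTdef
  -- S increases by 1 each step
  have hS1 : ∀ n, S (n + 1) = S n + 1 := by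
    intro n
    obtain ⟨j₁, j₂, hne, h1, h2, h3, h4, h5⟩ := hstep n
    have key : ∀ j, (φ (n + 1) j).toNat = (φ n j).toNat + if j = j₁ then 1 else 0 := by
      intro j
      by_cases hj1 : j = j₁
      · subst hj1; rw [h2, if_pos rfl]; omega
      · by_cases hj2 : j = j₂
        · subst hj2; rw [h4, if_neg hj1]; omega
        · rw [h5 j hj1 hj2, if_neg hj1]; omega
    simp only [hSdef, key, Finset.sum_add_distrib, Finset.sum_ite_eq', Finset.mem_univ,
      if_pos]
  have hSn : ∀ n, S n = S 0 + n := by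
    intro n
    induction n with
    | zero => rfl
    | succ m ih => rw [hS1 m, ih]; omega
  have hS0 : 1 ≤ S 0 := by
    obtain ⟨j₁, j₂, hne, h1, h2, h3, h4, h5⟩ := hstep 0
    have : 1 ≤ (φ 0 j₁).toNat := by omega
    calc 1 ≤ (φ 0 j₁).toNat := this
      _ ≤ S 0 := Finset.single_le_sum (f := fun j => (φ 0 j).toNat)
          (fun j _ => Nat.zero_le _) (Finset.mem_univ j₁)
  have hTS : ∀ n, (T n : ℤ) = (S n : ℤ) - ∑ j, φ n j := by
    intro n
    simp only [hSdef, hTdef]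
    push_cast
    rw [← Finset.sum_sub_distrib]
    exact Finset.sum_congr rfl fun j _ => by omega
  -- shift bound : g (T n) ≤ Cs * g (S n)
  have hTg : ∀ n, g (T n) ≤ Cs * g (S n) := by
    intro n
    have hM : |(-∑ j, φ n j : ℤ)| ≤ (N : ℤ) := by rw [abs_neg]; exact habs n
    have heq : (S n : ℤ) + (-∑ j, φ n j) = (T n : ℤ) := by rw [hTS n]; ring
    have h0 : 0 ≤ (S n : ℤ) + (-∑ j, φ n j) := by rw [heq]; positivity
    have := hCshift _ hM (S n) h0
    rwa [heq, Int.toNat_natCast] at this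
  -- denominator lower bound
  have hden : ∀ n, cmin * f (S n) ≤
      ∑ j ∈ Finset.univ.filter (fun j => 0 < φ n j), f (φ n j).toNat := by
    intro n
    set Q := Finset.univ.filter (fun j => 0 < φ n j) with hQ
    obtain ⟨j₁, j₂, hne, h1, h2, h3, h4, h5⟩ := hstep n
    have hQcard : 1 ≤ Q.card :=
      Finset.Nonempty.card_pos ⟨j₁, by simp [hQ, h1]⟩
    have hQle : Q.card ≤ d := by
      calc Q.card ≤ Finset.univ.card := Finset.card_le_card (Finset.subset_univ Q)
        _ = d := by simp
    set e := Q.equivFin with he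
    set a : Fin Q.card → ℕ := fun i => (φ n ((e.symm i : Q) : Fin d)).toNat with ha
    have hsum1 : ∑ i, a i = S n := by
      have h1' : ∑ i, a i = ∑ j ∈ Q, (φ n j).toNat := by
        rw [← Finset.sum_coe_sort Q (fun j => (φ n j).toNat)]
        exact Fintype.sum_equiv e.symm _ _ fun i => rfl
      rw [h1', hSdef]
      exact Finset.sum_subset (Finset.subset_univ Q) fun j _ hj => by
        simp only [hQ, Finset.mem_filter, Finset.mem_univ, true_and] at hj; omega
    have hsum2 : ∑ i, f (a i) = ∑ j ∈ Q, f (φ n j).toNat := by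
      rw [← Finset.sum_coe_sort Q (fun j => f (φ n j).toNat)]
      exact Fintype.sum_equiv e.symm _ _ fun i => rfl
    have hmain := hcc Q.card hQcard a
    rw [hsum1, hsum2] at hmain
    calc cmin * f (S n) ≤ c' Q.card * f (S n) := by
          apply mul_le_mul_of_nonneg_right (hcminle _ hQcard hQle) (hfpos _).le
      _ = cc Q.card hQcard * f (S n) := by rw [hc'def]; simp [hQcard]
      _ ≤ _ := hmain
  -- numerator upper bound
  have hnum : ∀ n, (∑ j ∈ Finset.univ.filter (fun j => φ n j ≤ 0), g (-φ n j).toNat) ≤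
      Cmax * g (T n) := by
    intro n
    set P := Finset.univ.filter (fun j => φ n j ≤ 0) with hP
    obtain ⟨j₁, j₂, hne, h1, h2, h3, h4, h5⟩ := hstep n
    have hPcard : 1 ≤ P.card :=
      Finset.Nonempty.card_pos ⟨j₂, by simp [hP, h3]⟩
    have hPle : P.card ≤ d := by
      calc P.card ≤ Finset.univ.card := Finset.card_le_card (Finset.subset_univ P)
        _ = d := by simp
    set e := P.equivFin with he
    set a : Fin P.card → ℕ := fun i => (-φ n ((e.symm i : P) : Fin d)).toNat with ha
    have hsum1 : ∑ i, a i = T n := by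
      have h1' : ∑ i, a i = ∑ j ∈ P, (-φ n j).toNat := by
        rw [← Finset.sum_coe_sort P (fun j => (-φ n j).toNat)]
        exact Fintype.sum_equiv e.symm _ _ fun i => rfl
      rw [h1', hTdef]
      exact Finset.sum_subset (Finset.subset_univ P) fun j _ hj => by
        simp only [hP, Finset.mem_filter, Finset.mem_univ, true_and] at hj; omega
    have hsum2 : ∑ i, g (a i) = ∑ j ∈ P, g (-φ n j).toNat := by
      rw [← Finset.sum_coe_sort P (fun j => g (-φ n j).toNat)]
      exact Fintype.sum_equiv e.symm _ _ fun i => rfl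
    have hmain := hCC P.card hPcard a
    rw [hsum1, hsum2] at hmain
    calc ∑ j ∈ P, g (-φ n j).toNat ≤ CC P.card hPcard * g (T n) := hmain
      _ = C' P.card * g (T n) := by rw [hC'def]; simp [hPcard]
      _ ≤ Cmax * g (T n) := by
          apply mul_le_mul_of_nonneg_right (hCmaxge _ hPcard hPle) (hgpos _).le
  -- comparison
  set K := Cmax * Cs / cmin with hKdef
  have hcomp : Summable (fun n : ℕ => K * (g (n + (S 0 - 1) + 1) / f (n + (S 0 - 1) + 1))) :=
    (((summable_nat_add_iff (S 0 - 1)).mpr hsum)).mul_left K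
  apply Summable.of_nonneg_of_le _ _ hcomp
  · intro n
    apply div_nonneg
    · exact Finset.sum_nonneg fun j _ => (hgpos _).le
    · exact Finset.sum_nonneg fun j _ => (hfpos _).le
  · intro n
    have hSeq : S n = n + (S 0 - 1) + 1 := by rw [hSn n]; omega
    have hdpos : 0 < cmin * f (S n) := mul_pos hcminpos (hfpos _)
    have hnum' : (∑ j ∈ Finset.univ.filter (fun j => φ n j ≤ 0), g (-φ n j).toNat) ≤
        (Cmax * Cs) * g (S n) := by
      calc _ ≤ Cmax * g (T n) := hnum n
        _ ≤ Cmax * (Cs * g (S n)) := by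
            apply mul_le_mul_of_nonneg_left (hTg n) hCmaxpos.le
        _ = (Cmax * Cs) * g (S n) := by ring
    calc (∑ j ∈ Finset.univ.filter (fun j => φ n j ≤ 0), g (-φ n j).toNat) /
        (∑ j ∈ Finset.univ.filter (fun j => 0 < φ n j), f (φ n j).toNat)
        ≤ ((Cmax * Cs) * g (S n)) / (cmin * f (S n)) := by
          exact div_le_div₀ (mul_nonneg (mul_nonneg hCmaxpos.le hCspos.le) (hgpos _).le) hnum' hdpos (hden n)
      _ = K * (g (S n) / f (S n)) := by
          rw [hKdef, mul_div_mul_comm, div_mul_div_comm]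
      _ = K * (g (n + (S 0 - 1) + 1) / f (n + (S 0 - 1) + 1)) := by rw [hSeq]
end
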